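/- Recursion (K3): for every σ ∈ {0,1,…,r}^N, 𝐠(σ·r) = t^{-l}·𝐠((r-1)·σ) + q·t^{-l}·𝐠(r·σ), where l = #{i : σ_i < r}, σ·r denotes σ with the entry r appended, and (r-1)·σ and r·σ denote σ with the entry r-1 (respectively r) prepended. -/

import Mathlib

open MvPolynomial

noncomputable section

/-- The field `F = ℚ(q,a,t)` of rational functions in three variables over `ℚ`. -/
abbrev KRF : Type := FractionRing (MvPolynomial (Fin 3) ℚ)

/-- The variable `q` in `F`. -/
def fq : KRF := algebraMap (MvPolynomial (Fin 3) ℚ) KRF (X 0)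
/-- The variable `a` in `F`. -/
def fa : KRF := algebraMap (MvPolynomial (Fin 3) ℚ) KRF (X 1)
/-- The variable `t` in `F`. -/
def ft : KRF := algebraMap (MvPolynomial (Fin 3) ℚ) KRF (X 2)

/-- The number `|v|` of ones in a binary sequence. -/
def onesCt (v : List Bool) : ℕ := v.count true

/-- A p-family: a function on (balanced) pairs of binary sequences with values in
`F = ℚ(q,a,t)` satisfying the five recursion rules (1)-(5). -/
def IsPFamily (p : List Bool → List Bool → KRF) : Prop :=
  (∀ n : ℕ, p [] (List.replicate n false) = ((1 + fa) / (1 - fq)) ^ n) ∧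
  (∀ m : ℕ, p (List.replicate m false) [] = ((1 + fa) / (1 - fq)) ^ m) ∧
  (∀ v w : List Bool, onesCt v = onesCt w →
      p (v ++ [true]) (w ++ [true]) = (ft ^ onesCt v + fa) * p v w) ∧
  (∀ v w : List Bool, onesCt v = onesCt w + 1 →
      p (v ++ [false]) (w ++ [true]) = p v (true :: w)) ∧
  (∀ v w : List Bool, onesCt v + 1 = onesCt w →
      p (v ++ [true]) (w ++ [false]) = p (true :: v) w) ∧
  (∀ v w : List Bool, onesCt v = onesCt w →
      p (v ++ [false]) (w ++ [false]) =
        ft ^ (-(onesCt v : ℤ)) * p (true :: v) (true :: w) +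
          fq * ft ^ (-(onesCt v : ℤ)) * p (false :: v) (false :: w))

/-- The symbols `1`, `0`, `∗` used in fillings. -/
inductive Symb : Type
  | one : Symb
  | zero : Symb
  | star : Symb
deriving DecidableEq

/-- An admissible filling of the `r × N` grid (rows indexed top-to-bottom by `Fin r`,
columns left-to-right by `Fin N`): every row and every column contains at most one `1`,
every cell strictly below a `1` in the same column is `∗`, and every other cell is `0`
(i.e. every `∗` lies strictly below a `1` in its column). -/
def IsAdmissible {r N : ℕ} (T : Fin r → Fin N → Symb) : Prop :=
  (∀ (i : Fin r) (j j' : Fin N), T i j = Symb.one → T i j' = Symb.one → j = j') ∧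
  (∀ (j : Fin N) (i i' : Fin r), T i j = Symb.one → T i' j = Symb.one → i = i') ∧
  (∀ (i i' : Fin r) (j : Fin N), T i j = Symb.one → i < i' → T i' j = Symb.star) ∧
  (∀ (i : Fin r) (j : Fin N), T i j = Symb.star → ∃ i' : Fin r, i' < i ∧ T i' j = Symb.one)

/-- `σ(T)_j`: the number of cells labeled `0` in the `j`-th column of `T`. -/
def colZeros {r N : ℕ} (T : Fin r → Fin N → Symb) (j : Fin N) : ℕ :=
  (Finset.univ.filter (fun i => T i j = Symb.zero)).card

/-- `v(T)_j = 1` iff the `j`-th column of `T` is occupied (contains a `1`). -/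
def vFun {r N : ℕ} (T : Fin r → Fin N → Symb) (j : Fin N) : Bool :=
  decide (∃ i : Fin r, T i j = Symb.one)

/-- The binary sequence `v(T)` as a list. -/
def vList {r N : ℕ} (T : Fin r → Fin N → Symb) : List Bool :=
  (List.finRange N).map (vFun T)

/-- The binary sequence `w(T)`: read the entries of `T` from left to right along each row,
taking the rows from bottom to top, skipping all cells labeled `∗` (with `1 ↦ true`,
`0 ↦ false`). -/
def wList {r N : ℕ} (T : Fin r → Fin N → Symb) : List Bool :=
  ((List.finRange r).reverse.map (fun i =>
    (List.finRange N).filterMap (fun j =>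
      match T i j with
      | Symb.one => some true
      | Symb.zero => some false
      | Symb.star => none))).flatten


namespace K3aux

/-- The canonical admissible filling with column-zero-counts `σ`. -/
def canon (r : ℕ) {N : ℕ} (σ : Fin N → ℕ) : Fin r → Fin N → Symb :=
  fun i j => if (i : ℕ) < σ j then Symb.zero else if (i : ℕ) = σ j then Symb.one else Symb.star

lemma eq_canon {r N : ℕ} {T : Fin r → Fin N → Symb} (hT : IsAdmissible T)
    {σ : Fin N → ℕ} (hσ : ∀ j, colZeros T j = σ j) : T = canon r σ := by
  obtain ⟨_, hcol, hbelow, hstar⟩ := hT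
  funext i j
  by_cases hone : ∃ i0, T i0 j = Symb.one
  · obtain ⟨i0, h1⟩ := hone
    have hpat : ∀ i : Fin r, T i j =
        (if (i : ℕ) < (i0 : ℕ) then Symb.zero else if (i : ℕ) = (i0 : ℕ) then Symb.one
          else Symb.star) := by
      intro i
      rcases lt_trichotomy i i0 with h | h | h
      · rw [if_pos (by exact_mod_cast h)]
        cases he : T i j with
        | one => exact absurd (hcol j i i0 he h1) (ne_of_lt h)
        | zero => rfl
        | star =>
          obtain ⟨i', hi', h1'⟩ := hstar i j he
          have heq : i' = i0 := hcol j i' i0 h1' h1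
          exact absurd (heq ▸ hi') (asymm h)
      · subst h
        simp [h1]
      · have hv : (i0 : ℕ) < (i : ℕ) := h
        rw [hbelow i0 i j h1 h, if_neg (by omega), if_neg (by omega)]
    have hiff : ∀ x : Fin r, (T x j = Symb.zero) ↔ x < i0 := by
      intro x
      rw [hpat x]
      split_ifs with a b
      · simp only [iff_true_intro (Fin.lt_def.mpr a)]
      · constructor
        · intro h; cases h
        · intro h; exact absurd (Fin.lt_def.mp h) (by omega)
      · constructor
        · intro h; cases h
        · intro h; exact absurd (Fin.lt_def.mp h) (by omega)
    have hc : σ j = (i0 : ℕ) := by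
      rw [← hσ j]
      unfold colZeros
      rw [Finset.filter_congr (fun x _ => hiff x)]
      have h3 : Finset.univ.filter (fun i : Fin r => i < i0) = Finset.Iio i0 := by
        ext x; simp
      rw [h3, Fin.card_Iio]
    rw [hpat i]
    unfold canon
    rw [hc]
  · push_neg at hone
    have hz : ∀ i, T i j = Symb.zero := by
      intro i
      cases he : T i j with
      | one => exact absurd he (hone i)
      | zero => rfl
      | star =>
        obtain ⟨i', _, h1'⟩ := hstar i j he
        exact absurd h1' (hone i')
    have hc : σ j = r := by
      rw [← hσ j]
      unfold colZeros
      rw [Finset.filter_true_of_mem (fun i _ => hz i)]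
      simp
    rw [hz i]
    unfold canon
    rw [hc, if_pos i.isLt]

/-- The reading word of a single row of the canonical filling. -/
def rowσ {N : ℕ} (σ : Fin N → ℕ) (i : ℕ) : List Bool :=
  (List.finRange N).filterMap (fun j =>
    if i < σ j then some false else if i = σ j then some true else none)

/-- `v(σ)` as a list over `Fin N`. -/
def Vl {N : ℕ} (r : ℕ) (σ : Fin N → ℕ) : List Bool :=
  (List.finRange N).map (fun j => decide (σ j < r))

/-- The reading word of `T(σ·r)`. -/
def Wl {N : ℕ} (r : ℕ) (σ : Fin N → ℕ) : List Bool :=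
  (((List.finRange r).reverse.map (fun i : Fin r => rowσ σ (i : ℕ))).map
    (fun l => l ++ [false])).flatten

lemma wList_canon {r N : ℕ} (σ : Fin N → ℕ) :
    wList (canon r σ) =
      ((List.finRange r).reverse.map (fun i : Fin r => rowσ σ (i : ℕ))).flatten := by
  unfold wList rowσ canon
  congr 1
  apply List.map_congr_left
  intro i _
  apply List.filterMap_congr
  intro j _
  split_ifs <;> rfl

lemma vList_canon {r N : ℕ} (σ : Fin N → ℕ) :
    vList (canon r σ) = (List.finRange N).map (fun j => decide (σ j < r)) := by
  unfold vList
  apply List.map_congr_left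
  intro j _
  unfold vFun canon
  rw [decide_eq_decide]
  constructor
  · rintro ⟨i, hi⟩
    by_contra hcon
    rw [if_pos (by have := i.isLt; omega)] at hi
    cases hi
  · intro h
    refine ⟨⟨σ j, h⟩, ?_⟩
    simp

lemma rowσ_cons {N : ℕ} (c : ℕ) (σ : Fin N → ℕ) (i : ℕ) :
    rowσ (Fin.cons c σ) i =
      (if i < c then [false] else if i = c then [true] else []) ++ rowσ σ i := by
  unfold rowσ
  rw [List.finRange_succ, List.filterMap_cons, List.filterMap_map]
  simp only [Fin.cons_zero, Fin.cons_succ, Function.comp_def]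
  split_ifs <;> rfl

lemma rowσ_snoc {N : ℕ} (σ : Fin N → ℕ) (c : ℕ) (i : ℕ) (h : i < c) :
    rowσ (Fin.snoc σ c) i = rowσ σ i ++ [false] := by
  unfold rowσ
  rw [List.finRange_succ_last, List.filterMap_append, List.filterMap_map]
  simp only [Fin.snoc_castSucc, Fin.snoc_last, Function.comp_def,
    List.filterMap_cons, List.filterMap_nil, if_pos h]

lemma flat_shift (t : List (List Bool)) :
    (t.map (fun l => false :: l)).flatten ++ [false] =
      false :: (t.map (fun l => l ++ [false])).flatten := by
  induction t with
  | nil => rfl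
  | cons h tl ih =>
    simp only [List.map_cons, List.flatten_cons, List.cons_append, List.append_assoc, ih,
      List.nil_append]

lemma countP_finRange {N : ℕ} (q : Fin N → Prop) [DecidablePred q] :
    (List.finRange N).countP (fun j => decide (q j)) = (Finset.univ.filter q).card := by
  rw [Fin.univ_def]
  simp [Finset.card, Finset.filter, List.countP_eq_length_filter]

lemma sum_fibers {r N : ℕ} (σ : Fin N → ℕ) :
    ∑ i : Fin r, (Finset.univ.filter (fun j : Fin N => (i : ℕ) = σ j)).card =
      (Finset.univ.filter (fun j : Fin N => σ j < r)).card := by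
  rw [← Finset.card_biUnion]
  · congr 1
    ext j
    simp only [Finset.mem_biUnion, Finset.mem_filter, Finset.mem_univ, true_and]
    constructor
    · rintro ⟨i, h⟩
      have := i.isLt
      omega
    · intro h
      exact ⟨⟨σ j, h⟩, rfl⟩
  · intro i _ i' _ hne
    show Disjoint _ _
    rw [Finset.disjoint_left]
    intro j hj hj'
    simp only [Finset.mem_filter, Finset.mem_univ, true_and] at hj hj'
    exact hne (Fin.ext (by omega))

lemma count_true_rowσ {N : ℕ} (σ : Fin N → ℕ) (i : ℕ) :
    (rowσ σ i).count true = (Finset.univ.filter (fun j : Fin N => (i : ℕ) = σ j)).card := by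
  unfold rowσ
  rw [List.count_eq_countP, List.countP_filterMap]
  have hfn : (fun j : Fin N => (((if i < σ j then some false else if i = σ j then some true
        else none).map (· == true)).getD false)) = fun j : Fin N => decide ((i : ℕ) = σ j) := by
    funext j
    split_ifs with h1 h2 <;> simp <;> omega
  rw [hfn, countP_finRange]

lemma ones_V {N : ℕ} (r : ℕ) (σ : Fin N → ℕ) :
    onesCt (Vl r σ) = (Finset.univ.filter (fun j : Fin N => σ j < r)).card := by
  unfold onesCt Vl
  rw [List.count_eq_countP, List.countP_map]
  have hfn : ((· == true) ∘ fun j : Fin N => decide (σ j < r)) =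
      fun j : Fin N => decide (σ j < r) := by
    funext j; simp
  rw [hfn, countP_finRange]

lemma ones_W {N : ℕ} (r : ℕ) (σ : Fin N → ℕ) :
    onesCt (Wl r σ) = (Finset.univ.filter (fun j : Fin N => σ j < r)).card := by
  unfold onesCt Wl
  rw [List.count_flatten, List.map_map, List.map_map, List.map_reverse, List.sum_reverse]
  have h1 : ((List.finRange r).map ((List.count true ∘ (fun l => l ++ [false])) ∘
        (fun i : Fin r => rowσ σ (i : ℕ))))
      = (List.finRange r).map
          (fun i : Fin r => (Finset.univ.filter (fun j : Fin N => (i : ℕ) = σ j)).card) := by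
    apply List.map_congr_left
    intro i _
    simp only [Function.comp_def, List.count_append, count_true_rowσ]
    simp
  rw [h1, ← Fin.sum_univ_def, sum_fibers]

lemma vsnoc {N : ℕ} (r : ℕ) (σ : Fin N → ℕ) :
    vList (canon r (Fin.snoc σ r)) = Vl r σ ++ [false] := by
  simp [vList_canon, Vl, List.finRange_succ_last, Function.comp_def]

lemma vcons {N : ℕ} (r c : ℕ) (σ : Fin N → ℕ) (h : c < r) :
    vList (canon r (Fin.cons c σ)) = true :: Vl r σ := by
  simp [vList_canon, Vl, List.finRange_succ, Function.comp_def, h]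

lemma vconsr {N : ℕ} (r : ℕ) (σ : Fin N → ℕ) :
    vList (canon r (Fin.cons r σ)) = false :: Vl r σ := by
  simp [vList_canon, Vl, List.finRange_succ, Function.comp_def]

lemma wsnoc {N : ℕ} (r : ℕ) (σ : Fin N → ℕ) :
    wList (canon r (Fin.snoc σ r)) = Wl r σ := by
  rw [wList_canon]
  unfold Wl
  rw [List.map_map]
  apply congrArg List.flatten
  apply List.map_congr_left
  intro i _
  exact rowσ_snoc σ r (i : ℕ) i.isLt

lemma wcons_r {N : ℕ} (r : ℕ) (σ : Fin N → ℕ) :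
    wList (canon r (Fin.cons r σ)) ++ [false] = false :: Wl r σ := by
  rw [wList_canon]
  have h1 : ((List.finRange r).reverse.map (fun i : Fin r => rowσ (Fin.cons r σ) (i : ℕ)))
      = ((List.finRange r).reverse.map (fun i : Fin r => rowσ σ (i : ℕ))).map
          (fun l => false :: l) := by
    rw [List.map_map]
    apply List.map_congr_left
    intro i _
    rw [rowσ_cons, if_pos i.isLt]
    rfl
  rw [h1, flat_shift]
  rfl

lemma wcons_top {N : ℕ} (k : ℕ) (σ : Fin N → ℕ) :
    wList (canon (k + 1) (Fin.cons k σ)) ++ [false] = true :: Wl (k + 1) σ := by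
  rw [wList_canon]
  have hrev : (List.finRange (k + 1)).reverse =
      Fin.last k :: ((List.finRange k).map Fin.castSucc).reverse := by
    rw [List.finRange_succ_last, List.reverse_append]
    rfl
  have hhead : rowσ (Fin.cons k σ) ((Fin.last k : Fin (k + 1)) : ℕ) = true :: rowσ σ k := by
    rw [Fin.val_last, rowσ_cons, if_neg (lt_irrefl k), if_pos rfl]
    rfl
  have htail : (((List.finRange k).map Fin.castSucc).reverse.map
        (fun i : Fin (k + 1) => rowσ (Fin.cons k σ) (i : ℕ)))
      = (((List.finRange k).map Fin.castSucc).reverse.map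
          (fun i : Fin (k + 1) => rowσ σ (i : ℕ))).map (fun l => false :: l) := by
    rw [List.map_map]
    apply List.map_congr_left
    intro i hi
    have hik : (i : ℕ) < k := by
      simp only [List.mem_reverse, List.mem_map] at hi
      obtain ⟨j, _, rfl⟩ := hi
      simp
    rw [rowσ_cons, if_pos hik]
    rfl
  unfold Wl
  rw [hrev, List.map_cons, List.flatten_cons, List.map_cons, List.map_cons, List.flatten_cons,
    hhead, htail, Fin.val_last]
  simp only [List.cons_append, List.append_assoc, flat_shift, List.singleton_append,
    List.nil_append]

end K3aux


/-- Recursion (K3): `𝐠(σ·r) = t^{-l}·𝐠((r-1)·σ) + q·t^{-l}·𝐠(r·σ)` where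
`l = #{i : σ_i < r}`.  Here `𝐠(σ) = p(v(σ), w(σ)·0)`, with `T1`, `T2`, `T3` the unique
admissible fillings whose column-zero-counts are `σ·r`, `(r-1)·σ`, `r·σ` respectively. -/
theorem g_recursion_K3 (p : List Bool → List Bool → KRF) (hp : IsPFamily p)
    (r : ℕ) (hr : 1 ≤ r) (N : ℕ) (σ : Fin N → ℕ) (hσ : ∀ i, σ i ≤ r)
    (T1 : Fin r → Fin (N + 1) → Symb) (hT1 : IsAdmissible T1)
    (hT1σ : ∀ j, colZeros T1 j = (Fin.snoc σ r : Fin (N + 1) → ℕ) j)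
    (T2 : Fin r → Fin (N + 1) → Symb) (hT2 : IsAdmissible T2)
    (hT2σ : ∀ j, colZeros T2 j = (Fin.cons (r - 1) σ : Fin (N + 1) → ℕ) j)
    (T3 : Fin r → Fin (N + 1) → Symb) (hT3 : IsAdmissible T3)
    (hT3σ : ∀ j, colZeros T3 j = (Fin.cons r σ : Fin (N + 1) → ℕ) j) :
    p (vList T1) (wList T1 ++ [false]) =
      ft ^ (-(((Finset.univ.filter (fun i => σ i < r)).card : ℤ))) *
          p (vList T2) (wList T2 ++ [false]) +
        fq * ft ^ (-(((Finset.univ.filter (fun i => σ i < r)).card : ℤ))) *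
          p (vList T3) (wList T3 ++ [false]) := by
  obtain ⟨k, rfl⟩ : ∃ k, r = k + 1 := ⟨r - 1, by omega⟩
  have e1 := K3aux.eq_canon hT1 hT1σ
  have e2 := K3aux.eq_canon hT2 hT2σ
  have e3 := K3aux.eq_canon hT3 hT3σ
  subst e1; subst e2; subst e3
  simp only [Nat.add_sub_cancel]
  rw [K3aux.vsnoc, K3aux.wsnoc, K3aux.vcons (k+1) k σ (by omega), K3aux.vconsr,
    K3aux.wcons_top, K3aux.wcons_r]
  rw [hp.2.2.2.2.2 (K3aux.Vl (k+1) σ) (K3aux.Wl (k+1) σ)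
    (by rw [K3aux.ones_V, K3aux.ones_W]), K3aux.ones_V]
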